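/- arXiv:2001.01533 — 4 statements merged into one kernel-verified Lean document; each statement's English description precedes it below -/
import Mathlib

section
/- Let n ≥ 1 be an integer and let p > 1, C₀ > 0, R > 0, Q > 0, a ≥ 0, b ≥ 0, L ≥ 1 and ℓ > 1 be real numbers. Let U, V : [0,∞) → ℝ with V continuous and nonnegative, suppose V(s) ≥ Q (R+s)^{-a} (s-L)^{b} for all s ≥ L, and suppose U(t) ≥ C₀ ∫₀ᵗ e^{τ-t} (∫₀^{τ} (R+s)^{-n(p-1)} V(s)^p ds) dτ for all t ≥ 0. Then for every t ≥ ℓL, U(t) ≥ (C₀ Q^p / ((pb+1) ℓ^{pb+1})) (R+t)^{-n(p-1)-pa} (t - ℓL)^{pb+1} (1 - e^{t(1/ℓ - 1)}). -/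
set_option maxHeartbeats 1000000


open Real intervalIntegral

/-- Inductive step for the functional `U` in the slicing iteration argument:
from the iteration frame `U(t) ≥ C₀ ∫₀ᵗ e^{τ-t} ∫₀^τ (R+s)^{-n(p-1)} V(s)^p ds dτ`
and the lower bound `V(s) ≥ Q (R+s)^{-a} (s-L)^b` for `s ≥ L`, one deduces, for every
`t ≥ ℓL`,
`U(t) ≥ (C₀ Q^p / ((pb+1) ℓ^{pb+1})) (R+t)^{-n(p-1)-pa} (t-ℓL)^{pb+1} (1 - e^{t(1/ℓ-1)})`. -/
theorem iteration_step_U (n : ℕ) (hn : 1 ≤ n) (p C₀ R Q a b L ℓ : ℝ)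
    (hp : 1 < p) (hC₀ : 0 < C₀) (hR : 0 < R) (hQ : 0 < Q) (ha : 0 ≤ a) (hb : 0 ≤ b)
    (hL : 1 ≤ L) (hℓ : 1 < ℓ)
    (U V : ℝ → ℝ) (hVc : Continuous V) (hVn : ∀ s, 0 ≤ V s)
    (hVlow : ∀ s : ℝ, L ≤ s → Q * (R + s) ^ (-a) * (s - L) ^ b ≤ V s)
    (hUframe : ∀ t : ℝ, 0 ≤ t →
      C₀ * ∫ τ in (0:ℝ)..t, Real.exp (τ - t) *
          ∫ s in (0:ℝ)..τ, (R + s) ^ (-((n : ℝ) * (p - 1))) * V s ^ p ≤ U t) :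
    ∀ t : ℝ, ℓ * L ≤ t →
      C₀ * Q ^ p / ((p * b + 1) * ℓ ^ (p * b + 1))
          * (R + t) ^ (-((n : ℝ) * (p - 1)) - p * a) * (t - ℓ * L) ^ (p * b + 1)
          * (1 - Real.exp (t * (1 / ℓ - 1))) ≤ U t := by
  intro t ht
  set κ : ℝ := -((n : ℝ) * (p - 1)) with hκdef
  have hκ : κ ≤ 0 := by
    have h1 : (1:ℝ) ≤ (n:ℝ) := by exact_mod_cast hn
    have : 0 ≤ (n : ℝ) * (p - 1) := by nlinarith
    linarith
  have hℓ0 : (0:ℝ) < ℓ := by linarith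
  have hL0 : (0:ℝ) < L := by linarith
  have htL : L < t := by nlinarith
  have ht0 : (0:ℝ) < t := by linarith
  have htℓ : L ≤ t / ℓ := by
    rw [le_div_iff₀ hℓ0]; linarith [ht, mul_comm ℓ L]
  have htℓt : t / ℓ ≤ t := by
    rw [div_le_iff₀ hℓ0]; nlinarith
  have hpb1 : (0:ℝ) < p * b + 1 := by nlinarith
  -- the regularized integrand
  set g : ℝ → ℝ := fun s => (R + max s 0) ^ κ * V (max s 0) ^ p with hg
  have hgc : Continuous g := by
    apply Continuous.mul
    · apply Continuous.rpow_const (by continuity)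
      intro x; left
      have : 0 < R + max x 0 := by positivity
      exact ne_of_gt this
    · apply Continuous.rpow_const (hVc.comp (by continuity))
      intro x; right; linarith
  have hgn : ∀ s, 0 ≤ g s := by
    intro s
    exact mul_nonneg (Real.rpow_nonneg (by positivity) _) (Real.rpow_nonneg (hVn _) _)
  have hgeq : ∀ s : ℝ, 0 ≤ s → g s = (R + s) ^ κ * V s ^ p := by
    intro s hs; simp [hg, max_eq_left hs]
  -- G is the primitive of g
  set G : ℝ → ℝ := fun τ => ∫ s in (0:ℝ)..τ, g s with hG
  have hGc : Continuous G :=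
    intervalIntegral.continuous_primitive (fun a b => hgc.intervalIntegrable a b) 0
  -- the inner integral equals G for τ ≥ 0
  have hinner : ∀ τ : ℝ, 0 ≤ τ →
      (∫ s in (0:ℝ)..τ, (R + s) ^ κ * V s ^ p) = G τ := by
    intro τ hτ
    refine (intervalIntegral.integral_congr fun s hs => ?_).symm
    rw [Set.uIcc_of_le hτ] at hs
    exact hgeq s hs.1
  -- key constant
  set e : ℝ := κ - p * a with he
  set M : ℝ := Q ^ p * (R + t) ^ e * ((t - ℓ * L) ^ (p * b + 1) / (ℓ ^ (p * b + 1) * (p * b + 1))) with hM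
  have hRt : (0:ℝ) < R + t := by linarith
  have hM0 : 0 ≤ M := by
    apply mul_nonneg (mul_nonneg (Real.rpow_nonneg hQ.le _) (Real.rpow_nonneg hRt.le _))
    apply div_nonneg (Real.rpow_nonneg (by nlinarith) _)
    positivity
  -- lower bound for G on [t/ℓ, t]
  have hGlow : ∀ τ ∈ Set.Icc (t / ℓ) t, M ≤ G τ := by
    intro τ hτ
    obtain ⟨hτ1, hτ2⟩ := hτ
    have hLτ : L ≤ τ := le_trans htℓ hτ1
    have h0L : (0:ℝ) ≤ L := hL0.le
    -- split the integral at L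
    have hsplit : G τ = (∫ s in (0:ℝ)..L, g s) + ∫ s in L..τ, g s :=
      (intervalIntegral.integral_add_adjacent_intervals
        (hgc.intervalIntegrable _ _) (hgc.intervalIntegrable _ _)).symm
    have h1 : 0 ≤ ∫ s in (0:ℝ)..L, g s :=
      intervalIntegral.integral_nonneg h0L fun s _ => hgn s
    -- pointwise bound on [L, τ]
    have hpt : ∀ s ∈ Set.Icc L τ,
        Q ^ p * (R + t) ^ e * (s - L) ^ (p * b) ≤ g s := by
      intro s hs
      obtain ⟨hs1, hs2⟩ := hs
      have hs0 : (0:ℝ) ≤ s := le_trans h0L hs1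
      have hRs : (0:ℝ) < R + s := by linarith
      have hsL : (0:ℝ) ≤ s - L := by linarith
      rw [hgeq s hs0]
      have hVlb : 0 ≤ Q * (R + s) ^ (-a) * (s - L) ^ b := by
        apply mul_nonneg (mul_nonneg hQ.le (Real.rpow_nonneg hRs.le _))
          (Real.rpow_nonneg hsL _)
      have hVp : (Q * (R + s) ^ (-a) * (s - L) ^ b) ^ p ≤ V s ^ p :=
        Real.rpow_le_rpow hVlb (hVlow s hs1) (by linarith)
      have hexp : (Q * (R + s) ^ (-a) * (s - L) ^ b) ^ p
          = Q ^ p * (R + s) ^ (-a * p) * (s - L) ^ (b * p) := by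
        rw [Real.mul_rpow (mul_nonneg hQ.le (Real.rpow_nonneg hRs.le _)) (Real.rpow_nonneg hsL _),
          Real.mul_rpow hQ.le (Real.rpow_nonneg hRs.le _),
          ← Real.rpow_mul hRs.le, ← Real.rpow_mul hsL]
      calc Q ^ p * (R + t) ^ e * (s - L) ^ (p * b)
          ≤ Q ^ p * (R + s) ^ e * (s - L) ^ (p * b) := by
            apply mul_le_mul_of_nonneg_right _ (Real.rpow_nonneg hsL _)
            apply mul_le_mul_of_nonneg_left _ (Real.rpow_nonneg hQ.le _)
            exact Real.rpow_le_rpow_of_nonpos hRs (by linarith) (by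
              have : 0 ≤ p * a := by nlinarith
              simp only [he]; linarith)
        _ = (R + s) ^ κ * (Q * (R + s) ^ (-a) * (s - L) ^ b) ^ p := by
            rw [hexp, show (-a) * p = -(p * a) by ring, show b * p = p * b by ring,
              he, Real.rpow_sub hRs, Real.rpow_neg hRs.le (p * a), div_eq_mul_inv]
            ring
        _ ≤ (R + s) ^ κ * V s ^ p :=
            mul_le_mul_of_nonneg_left hVp (Real.rpow_nonneg hRs.le _)
    -- integrate the pointwise bound
    have hmono : (∫ s in L..τ, Q ^ p * (R + t) ^ e * (s - L) ^ (p * b))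
        ≤ ∫ s in L..τ, g s := by
      apply intervalIntegral.integral_mono_on hLτ _ (hgc.intervalIntegrable _ _) hpt
      apply ContinuousOn.intervalIntegrable
      apply ContinuousOn.mul continuousOn_const
      apply ContinuousOn.rpow_const (by fun_prop)
      intro s hs
      right; positivity
    -- compute the power integral
    have hcomp : (∫ s in L..τ, (s - L) ^ (p * b)) = (τ - L) ^ (p * b + 1) / (p * b + 1) := by
      rw [intervalIntegral.integral_comp_sub_right (fun x => x ^ (p * b)) L]
      rw [integral_rpow (Or.inl (by linarith))]
      rw [sub_self, Real.zero_rpow (by linarith)]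
      ring_nf
    have hval : (∫ s in L..τ, Q ^ p * (R + t) ^ e * (s - L) ^ (p * b))
        = Q ^ p * (R + t) ^ e * ((τ - L) ^ (p * b + 1) / (p * b + 1)) := by
      rw [intervalIntegral.integral_const_mul, hcomp]
    -- compare (τ - L)^{pb+1} with (t - ℓL)^{pb+1}/ℓ^{pb+1}
    have hbase : (t - ℓ * L) / ℓ ≤ τ - L := by
      rw [div_le_iff₀ hℓ0]
      have h' : t ≤ τ * ℓ := by rw [← div_le_iff₀ hℓ0]; exact hτ1
      have h'' : (τ - L) * ℓ = τ * ℓ - L * ℓ := by ring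
      rw [h'']
      have h''' : ℓ * L = L * ℓ := mul_comm ℓ L
      linarith
    have hbase0 : (0:ℝ) ≤ (t - ℓ * L) / ℓ := by
      apply div_nonneg _ hℓ0.le; linarith
    have hpow : (t - ℓ * L) ^ (p * b + 1) / ℓ ^ (p * b + 1) ≤ (τ - L) ^ (p * b + 1) := by
      have := Real.rpow_le_rpow hbase0 hbase (by linarith : (0:ℝ) ≤ p * b + 1)
      rwa [Real.div_rpow (by linarith) hℓ0.le] at this
    have hMle : M ≤ Q ^ p * (R + t) ^ e * ((τ - L) ^ (p * b + 1) / (p * b + 1)) := by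
      rw [hM]
      apply mul_le_mul_of_nonneg_left _ (mul_nonneg (Real.rpow_nonneg hQ.le _)
        (Real.rpow_nonneg hRt.le _))
      rw [div_le_div_iff₀ (by positivity) hpb1]
      calc (t - ℓ * L) ^ (p * b + 1) * (p * b + 1)
          = ((t - ℓ * L) ^ (p * b + 1) / ℓ ^ (p * b + 1)) * (ℓ ^ (p * b + 1) * (p * b + 1)) := by
            have hℓp : (0:ℝ) < ℓ ^ (p * b + 1) := Real.rpow_pos_of_pos hℓ0 _
            field_simp
        _ ≤ (τ - L) ^ (p * b + 1) * (ℓ ^ (p * b + 1) * (p * b + 1)) := by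
            apply mul_le_mul_of_nonneg_right hpow
            positivity
    calc M ≤ Q ^ p * (R + t) ^ e * ((τ - L) ^ (p * b + 1) / (p * b + 1)) := hMle
      _ = ∫ s in L..τ, Q ^ p * (R + t) ^ e * (s - L) ^ (p * b) := hval.symm
      _ ≤ ∫ s in L..τ, g s := hmono
      _ ≤ G τ := by rw [hsplit]; linarith
  -- the exponential integral
  have hexpint : (∫ τ in (t / ℓ)..t, Real.exp (τ - t))
      = 1 - Real.exp (t * (1 / ℓ - 1)) := by
    have harg : t / ℓ - t = t * (1 / ℓ - 1) := by
      rw [mul_sub, mul_one, mul_one_div]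
    rw [intervalIntegral.integral_comp_sub_right Real.exp t, integral_exp, sub_self,
      Real.exp_zero, harg]
  -- main chain of integral inequalities
  have hEGc : Continuous fun τ => Real.exp (τ - t) * G τ := by
    exact ((Real.continuous_exp.comp (by continuity)).mul hGc)
  have h2 : M * (1 - Real.exp (t * (1 / ℓ - 1)))
      ≤ ∫ τ in (t / ℓ)..t, Real.exp (τ - t) * G τ := by
    have : (∫ τ in (t / ℓ)..t, Real.exp (τ - t) * M)
        ≤ ∫ τ in (t / ℓ)..t, Real.exp (τ - t) * G τ := by
      apply intervalIntegral.integral_mono_on htℓt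
        (Continuous.intervalIntegrable (by continuity) _ _)
        (hEGc.intervalIntegrable _ _)
      intro τ hτ
      exact mul_le_mul_of_nonneg_left (hGlow τ hτ) (Real.exp_nonneg _)
    calc M * (1 - Real.exp (t * (1 / ℓ - 1)))
        = ∫ τ in (t / ℓ)..t, Real.exp (τ - t) * M := by
          rw [intervalIntegral.integral_mul_const, hexpint]; ring
      _ ≤ _ := this
  have h3 : (∫ τ in (t / ℓ)..t, Real.exp (τ - t) * G τ)
      ≤ ∫ τ in (0:ℝ)..t, Real.exp (τ - t) * G τ := by
    have hsplit : (∫ τ in (0:ℝ)..(t / ℓ), Real.exp (τ - t) * G τ)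
        + (∫ τ in (t / ℓ)..t, Real.exp (τ - t) * G τ)
        = ∫ τ in (0:ℝ)..t, Real.exp (τ - t) * G τ :=
      intervalIntegral.integral_add_adjacent_intervals
        (hEGc.intervalIntegrable _ _) (hEGc.intervalIntegrable _ _)
    have hfirst : 0 ≤ ∫ τ in (0:ℝ)..(t / ℓ), Real.exp (τ - t) * G τ := by
      apply intervalIntegral.integral_nonneg (by positivity)
      intro τ hτ
      apply mul_nonneg (Real.exp_nonneg _)
      exact intervalIntegral.integral_nonneg hτ.1 fun s _ => hgn s
    linarith
  have h4 : (∫ τ in (0:ℝ)..t, Real.exp (τ - t) * G τ)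
      = ∫ τ in (0:ℝ)..t, Real.exp (τ - t) * ∫ s in (0:ℝ)..τ, (R + s) ^ κ * V s ^ p := by
    refine intervalIntegral.integral_congr fun τ hτ => ?_
    rw [Set.uIcc_of_le ht0.le] at hτ
    rw [hinner τ hτ.1]
  have hU := hUframe t ht0.le
  have hfinal : C₀ * (M * (1 - Real.exp (t * (1 / ℓ - 1)))) ≤ U t := by
    calc C₀ * (M * (1 - Real.exp (t * (1 / ℓ - 1))))
        ≤ C₀ * ∫ τ in (0:ℝ)..t, Real.exp (τ - t) * G τ := by
          apply mul_le_mul_of_nonneg_left _ hC₀.le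
          linarith
      _ = C₀ * ∫ τ in (0:ℝ)..t, Real.exp (τ - t) * ∫ s in (0:ℝ)..τ, (R + s) ^ κ * V s ^ p := by
          rw [h4]
      _ ≤ U t := hU
  have heq : C₀ * Q ^ p / ((p * b + 1) * ℓ ^ (p * b + 1))
      * (R + t) ^ (-((n : ℝ) * (p - 1)) - p * a) * (t - ℓ * L) ^ (p * b + 1)
      * (1 - Real.exp (t * (1 / ℓ - 1)))
      = C₀ * (M * (1 - Real.exp (t * (1 / ℓ - 1)))) := by
    rw [hM]
    have : (R + t) ^ (-((n : ℝ) * (p - 1)) - p * a) = (R + t) ^ e := by rw [he, hκdef]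
    rw [this]
    have hℓp : (0:ℝ) < ℓ ^ (p * b + 1) := Real.rpow_pos_of_pos hℓ0 _
    field_simp
  rw [heq]
  exact hfinal
end

section
/- Let n ≥ 1 be an integer and let q > 1, C₀ > 0, R > 0, D > 0, α ≥ 0, β ≥ 0 and L' ≥ L ≥ 0 be real numbers. Let U, V : [0,∞) → ℝ with U continuous and nonnegative, suppose U(s) ≥ D (R+s)^{-α} (s-L)^{β} for all s ≥ L, and suppose V(t) ≥ C₀ ∫₀ᵗ (∫₀^{τ} (R+s)^{-n(q-1)} U(s)^q ds) dτ for all t ≥ 0. Then for every t ≥ L', V(t) ≥ (C₀ D^q / ((qβ+1)(qβ+2))) (R+t)^{-n(q-1)-qα} (t - L')^{qβ+2}. -/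
open Real intervalIntegral

private lemma integral_sub_rpow {c : ℝ} (hc : 0 ≤ c) (L τ : ℝ) :
    ∫ s in L..τ, (s - L) ^ c = (τ - L) ^ (c + 1) / (c + 1) := by
  rw [intervalIntegral.integral_comp_sub_right (fun x => x ^ c) L, sub_self,
    integral_rpow (Or.inl (by linarith)), Real.zero_rpow (by positivity)]
  ring

/-- Inductive step for the functional `V` in the slicing iteration argument:
from the iteration frame `V(t) ≥ C₀ ∫₀ᵗ ∫₀^τ (R+s)^{-n(q-1)} U(s)^q ds dτ`
and the lower bound `U(s) ≥ D (R+s)^{-α} (s-L)^β` for `s ≥ L`, one deduces, for every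
`t ≥ L'` (where `L' ≥ L`),
`V(t) ≥ (C₀ D^q / ((qβ+1)(qβ+2))) (R+t)^{-n(q-1)-qα} (t-L')^{qβ+2}`. -/
theorem iteration_step_V (n : ℕ) (hn : 1 ≤ n) (q C₀ R D α β L L' : ℝ)
    (hq : 1 < q) (hC₀ : 0 < C₀) (hR : 0 < R) (hD : 0 < D) (hα : 0 ≤ α) (hβ : 0 ≤ β)
    (hL : 0 ≤ L) (hLL' : L ≤ L')
    (U V : ℝ → ℝ) (hUc : Continuous U) (hUn : ∀ s, 0 ≤ U s)
    (hUlow : ∀ s : ℝ, L ≤ s → D * (R + s) ^ (-α) * (s - L) ^ β ≤ U s)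
    (hVframe : ∀ t : ℝ, 0 ≤ t →
      C₀ * ∫ τ in (0:ℝ)..t,
          ∫ s in (0:ℝ)..τ, (R + s) ^ (-((n : ℝ) * (q - 1))) * U s ^ q ≤ V t) :
    ∀ t : ℝ, L' ≤ t →
      C₀ * D ^ q / ((q * β + 1) * (q * β + 2))
          * (R + t) ^ (-((n : ℝ) * (q - 1)) - q * α) * (t - L') ^ (q * β + 2) ≤ V t := by
  intro t ht
  have htL : L ≤ t := le_trans hLL' ht
  have ht0 : 0 ≤ t := le_trans hL htL
  have hq0 : (0:ℝ) < q := lt_trans one_pos hq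
  set e : ℝ := -((n : ℝ) * (q - 1)) with he
  set A : ℝ := e - q * α with hA
  have hA0 : A ≤ 0 := by
    have h1 : (0:ℝ) ≤ (n : ℝ) * (q - 1) := by
      have : (0:ℝ) ≤ (n : ℝ) := Nat.cast_nonneg n
      nlinarith
    have h2 : (0:ℝ) ≤ q * α := by positivity
    simp only [hA, he]; linarith
  set g : ℝ → ℝ := fun s => (R + s) ^ e * U s ^ q with hg
  set K : ℝ := D ^ q * (R + t) ^ A with hK
  have hRt : (0:ℝ) < R + t := by linarith
  have hK0 : 0 < K := mul_pos (by positivity) (Real.rpow_pos_of_pos hRt A)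
  -- continuity of g on [0, t]
  have hgcont : ContinuousOn g (Set.Icc 0 t) := by
    apply ContinuousOn.mul
    · intro s hs
      exact ((Real.continuousAt_rpow_const (R + s) e
        (Or.inl (by intro h; nlinarith [hs.1]))).comp
        (by fun_prop : ContinuousAt (fun s : ℝ => R + s) s)).continuousWithinAt
    · exact ((Real.continuous_rpow_const hq0.le).comp hUc).continuousOn
  have hgint : ∀ a b : ℝ, 0 ≤ a → a ≤ b → b ≤ t →
      IntervalIntegrable g MeasureTheory.volume a b := fun a b ha hab hb =>
    (hgcont.mono (by rw [Set.uIcc_of_le hab]; exact Set.Icc_subset_Icc ha hb)).intervalIntegrable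
  have hgnn : ∀ s : ℝ, 0 ≤ s → 0 ≤ g s := fun s hs =>
    mul_nonneg (Real.rpow_nonneg (by linarith) e) (Real.rpow_nonneg (hUn s) q)
  -- pointwise lower bound on [L, t]
  have hglow : ∀ s ∈ Set.Icc L t, K * (s - L) ^ (q * β) ≤ g s := by
    intro s hs
    have hRs : (0:ℝ) < R + s := by linarith [hs.1]
    have hsL : (0:ℝ) ≤ s - L := by linarith [hs.1]
    have hU : D * (R + s) ^ (-α) * (s - L) ^ β ≤ U s := hUlow s hs.1
    have h1 : (D * (R + s) ^ (-α) * (s - L) ^ β) ^ q ≤ U s ^ q :=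
      Real.rpow_le_rpow (by positivity) hU hq0.le
    have h2 : (D * (R + s) ^ (-α) * (s - L) ^ β) ^ q
        = D ^ q * (R + s) ^ (-α * q) * (s - L) ^ (β * q) := by
      rw [Real.mul_rpow (by positivity) (Real.rpow_nonneg hsL β),
        Real.mul_rpow hD.le (Real.rpow_nonneg hRs.le _),
        ← Real.rpow_mul hRs.le, ← Real.rpow_mul hsL]
    have h3 : (R + s) ^ e * ((R + s) ^ (-α * q)) = (R + s) ^ A := by
      rw [← Real.rpow_add hRs]; congr 1; rw [hA]; ring
    have h4 : (R + t) ^ A ≤ (R + s) ^ A :=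
      Real.rpow_le_rpow_of_nonpos hRs (by linarith [hs.2]) hA0
    have h5 : (s - L) ^ (β * q) = (s - L) ^ (q * β) := by rw [mul_comm]
    have key : K * (s - L) ^ (q * β) ≤ (R + s) ^ e * (D * (R + s) ^ (-α) * (s - L) ^ β) ^ q := by
      rw [h2]
      calc K * (s - L) ^ (q * β)
          ≤ D ^ q * (R + s) ^ A * (s - L) ^ (q * β) := by
            rw [hK]
            exact mul_le_mul_of_nonneg_right
              (mul_le_mul_of_nonneg_left h4 (by positivity)) (Real.rpow_nonneg hsL _)
        _ = (R + s) ^ e * (D ^ q * (R + s) ^ (-α * q) * (s - L) ^ (β * q)) := by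
            rw [h5, ← h3]; ring
    refine le_trans key ?_
    exact mul_le_mul_of_nonneg_left h1 (Real.rpow_nonneg hRs.le e)
  have hP1 : (0:ℝ) < q * β + 1 := by positivity
  have hP2 : (0:ℝ) < q * β + 2 := by positivity
  have hlowcont : Continuous (fun s : ℝ => K * (s - L) ^ (q * β)) :=
    continuous_const.mul ((Real.continuous_rpow_const (by positivity)).comp
      (continuous_sub_right L))
  set F : ℝ → ℝ := fun τ => ∫ s in (0:ℝ)..τ, g s with hF
  -- lower bound for the inner integral
  have hinner : ∀ τ ∈ Set.Icc L t, K / (q * β + 1) * (τ - L) ^ (q * β + 1) ≤ F τ := by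
    intro τ hτ
    have hsplit : F τ = (∫ s in (0:ℝ)..L, g s) + ∫ s in L..τ, g s :=
      (integral_add_adjacent_intervals (hgint 0 L le_rfl hL htL)
        (hgint L τ hL hτ.1 hτ.2)).symm
    have h0 : 0 ≤ ∫ s in (0:ℝ)..L, g s :=
      intervalIntegral.integral_nonneg hL (fun s hs => hgnn s hs.1)
    have hmono : ∫ s in L..τ, K * (s - L) ^ (q * β) ≤ ∫ s in L..τ, g s :=
      intervalIntegral.integral_mono_on hτ.1 (hlowcont.intervalIntegrable L τ)
        (hgint L τ hL hτ.1 hτ.2)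
        (fun s hs => hglow s ⟨hs.1, le_trans hs.2 hτ.2⟩)
    have hcomp : ∫ s in L..τ, K * (s - L) ^ (q * β)
        = K / (q * β + 1) * (τ - L) ^ (q * β + 1) := by
      rw [intervalIntegral.integral_const_mul, integral_sub_rpow (by positivity)]
      ring
    rw [hsplit, ← hcomp]
    linarith
  -- monotonicity / integrability of F
  have hFmono : MonotoneOn F (Set.Icc 0 t) := by
    intro a ha b hb hab
    have hsplit : F b = F a + ∫ s in a..b, g s :=
      (integral_add_adjacent_intervals (hgint 0 a le_rfl ha.1 ha.2)
        (hgint a b ha.1 hab hb.2)).symm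
    have h0 : 0 ≤ ∫ s in a..b, g s :=
      intervalIntegral.integral_nonneg hab (fun s hs => hgnn s (le_trans ha.1 hs.1))
    linarith
  have hFint0L : IntervalIntegrable F MeasureTheory.volume 0 L :=
    MonotoneOn.intervalIntegrable (by
      rw [Set.uIcc_of_le hL]
      exact hFmono.mono (Set.Icc_subset_Icc le_rfl htL))
  have hFintLt : IntervalIntegrable F MeasureTheory.volume L t :=
    MonotoneOn.intervalIntegrable (by
      rw [Set.uIcc_of_le htL]
      exact hFmono.mono (Set.Icc_subset_Icc hL le_rfl))
  -- lower bound for the outer integral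
  have houtsplit : ∫ τ in (0:ℝ)..t, F τ = (∫ τ in (0:ℝ)..L, F τ) + ∫ τ in L..t, F τ :=
    (integral_add_adjacent_intervals hFint0L hFintLt).symm
  have h0L : 0 ≤ ∫ τ in (0:ℝ)..L, F τ :=
    intervalIntegral.integral_nonneg hL (fun τ hτ =>
      intervalIntegral.integral_nonneg hτ.1 (fun s hs => hgnn s hs.1))
  have hlowcont2 : Continuous (fun τ : ℝ => K / (q * β + 1) * (τ - L) ^ (q * β + 1)) :=
    continuous_const.mul ((Real.continuous_rpow_const (by positivity)).comp
      (continuous_sub_right L))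
  have hmono2 : ∫ τ in L..t, K / (q * β + 1) * (τ - L) ^ (q * β + 1) ≤ ∫ τ in L..t, F τ :=
    intervalIntegral.integral_mono_on htL (hlowcont2.intervalIntegrable L t) hFintLt hinner
  have hcomp2 : ∫ τ in L..t, K / (q * β + 1) * (τ - L) ^ (q * β + 1)
      = K / (q * β + 1) * ((t - L) ^ (q * β + 2) / (q * β + 2)) := by
    rw [intervalIntegral.integral_const_mul, integral_sub_rpow (by positivity),
      show q * β + 1 + 1 = q * β + 2 by ring]
  have hout : K / (q * β + 1) * ((t - L) ^ (q * β + 2) / (q * β + 2))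
      ≤ ∫ τ in (0:ℝ)..t, F τ := by
    rw [houtsplit, ← hcomp2]; linarith
  have hXY : (t - L') ^ (q * β + 2) ≤ (t - L) ^ (q * β + 2) :=
    Real.rpow_le_rpow (sub_nonneg.2 ht) (by linarith) (by positivity)
  have hVt : C₀ * ∫ τ in (0:ℝ)..t, F τ ≤ V t := hVframe t ht0
  calc C₀ * D ^ q / ((q * β + 1) * (q * β + 2)) * (R + t) ^ A * (t - L') ^ (q * β + 2)
      = C₀ * (K / (q * β + 1) * ((t - L') ^ (q * β + 2) / (q * β + 2))) := by
        rw [hK]; field_simp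
    _ ≤ C₀ * (K / (q * β + 1) * ((t - L) ^ (q * β + 2) / (q * β + 2))) := by
        have h1 : 0 ≤ C₀ * (K / (q * β + 1)) / (q * β + 2) := by positivity
        calc C₀ * (K / (q * β + 1) * ((t - L') ^ (q * β + 2) / (q * β + 2)))
            = C₀ * (K / (q * β + 1)) / (q * β + 2) * (t - L') ^ (q * β + 2) := by ring
          _ ≤ C₀ * (K / (q * β + 1)) / (q * β + 2) * (t - L) ^ (q * β + 2) :=
              mul_le_mul_of_nonneg_left hXY h1
          _ = C₀ * (K / (q * β + 1) * ((t - L) ^ (q * β + 2) / (q * β + 2))) := by ring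
    _ ≤ C₀ * ∫ τ in (0:ℝ)..t, F τ := mul_le_mul_of_nonneg_left hout hC₀.le
    _ ≤ V t := hVt
end

section
/- Let r > 1 be a real number, let j ≥ 1 be a natural number, and set ℓ := 1 + r^{-j/2}. Then for every real t ≥ ℓ, 1 - e^{t(1/ℓ - 1)} ≥ (r^{1/2} - 1/2) r^{-j}. -/
open Real

/-- For `r > 1`, `j ≥ 1` and `ℓ = 1 + r^{-j/2}`, one has
`1 - e^{t(1/ℓ - 1)} ≥ (r^{1/2} - 1/2) r^{-j}` for every `t ≥ ℓ`. -/
theorem exp_factor_lower_bound (r : ℝ) (hr : 1 < r) (j : ℕ) (hj : 1 ≤ j) :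
    ∀ t : ℝ, 1 + r ^ (-(j : ℝ) / 2) ≤ t →
      (r ^ ((1 : ℝ) / 2) - 1 / 2) * r ^ (-(j : ℝ))
        ≤ 1 - Real.exp (t * (1 / (1 + r ^ (-(j : ℝ) / 2)) - 1)) := by
  intro t ht
  set a : ℝ := r ^ (-(j : ℝ) / 2) with ha_def
  have hr0 : (0 : ℝ) < r := by linarith
  have ha : 0 < a := Real.rpow_pos_of_pos hr0 _
  have hl : (0 : ℝ) < 1 + a := by linarith
  -- step 1: exponent ≤ -a
  have h1 : t * (1 / (1 + a) - 1) ≤ -a := by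
    have : 1 / (1 + a) - 1 = -(a / (1 + a)) := by field_simp; ring
    rw [this]
    have hfrac : 0 ≤ a / (1 + a) := by positivity
    have : (1 + a) * (a / (1 + a)) ≤ t * (a / (1 + a)) :=
      mul_le_mul_of_nonneg_right ht hfrac
    have heq : (1 + a) * (a / (1 + a)) = a := by field_simp
    nlinarith
  have h2 : Real.exp (t * (1 / (1 + a) - 1)) ≤ Real.exp (-a) := Real.exp_le_exp.mpr h1
  -- step 2: exp(-a) ≤ 1 - a + a^2/2
  have h3 : Real.exp (-a) ≤ 1 - a + a ^ 2 / 2 := by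
    have hq : 1 + a + a ^ 2 / 2 ≤ Real.exp a := Real.quadratic_le_exp_of_nonneg ha.le
    have hpos : (0 : ℝ) < 1 + a + a ^ 2 / 2 := by positivity
    rw [Real.exp_neg]
    have hpos2 : (0 : ℝ) < 1 - a + a ^ 2 / 2 := by nlinarith [sq_nonneg (a - 1)]
    rw [inv_le_iff_one_le_mul₀ (Real.exp_pos a)]
    nlinarith [sq_nonneg (a ^ 2), mul_le_mul_of_nonneg_right hq hpos2.le]
  -- step 3: a^2 = r^(-j)
  have hsq : a ^ 2 = r ^ (-(j : ℝ)) := by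
    rw [ha_def, ← Real.rpow_natCast (r ^ (-(j : ℝ) / 2)) 2, ← Real.rpow_mul hr0.le]
    norm_num
  -- step 4: r^(1/2 - j) ≤ a
  have h4 : r ^ ((1 : ℝ) / 2) * r ^ (-(j : ℝ)) ≤ a := by
    rw [← Real.rpow_add hr0, ha_def]
    apply Real.rpow_le_rpow_left_iff hr |>.mpr
    have : (1 : ℝ) ≤ (j : ℝ) := by exact_mod_cast hj
    linarith
  nlinarith
end

section
/- Let r > 1, a > 0 and b be real numbers, and let (d_j)_{j≥1} be a sequence of real numbers satisfying d_j ≥ r d_{j-2} - a j + b for every odd j ≥ 3. Then for every odd number j ≥ 1 with j ≥ b/a - 2r/(r-1), one has d_j ≥ r^{(j-1)/2} ( d₁ - a(3r-1)/(r-1)² + b/(r-1) ). -/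
/-- Abstract iterated lower bound: if `d_j ≥ r d_{j-2} - a j + b` for every odd `j ≥ 3`
(with `r > 1`, `a > 0`), then for every odd `j ≥ 1` with `j ≥ b/a - 2r/(r-1)` one has
`d_j ≥ r^{(j-1)/2} (d₁ - a(3r-1)/(r-1)² + b/(r-1))`. -/
theorem iterated_log_lower_bound (r a b : ℝ) (hr : 1 < r) (ha : 0 < a) (d : ℕ → ℝ)
    (hrec : ∀ j : ℕ, 3 ≤ j → Odd j → r * d (j - 2) - a * (j : ℝ) + b ≤ d j) :
    ∀ j : ℕ, 1 ≤ j → Odd j → b / a - 2 * r / (r - 1) ≤ (j : ℝ) →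
      r ^ ((j - 1) / 2) * (d 1 - a * (3 * r - 1) / (r - 1) ^ 2 + b / (r - 1)) ≤ d j := by
  have hr1 : (0:ℝ) < r - 1 := by linarith
  have hrne : r - 1 ≠ 0 := ne_of_gt hr1
  set α : ℝ := a / (r - 1) with hα
  set β : ℝ := (2 * r * α - b) / (r - 1) with hβ
  have hαr : α * (r - 1) = a := div_mul_cancel₀ a hrne
  have hβr : β * (r - 1) = 2 * r * α - b := div_mul_cancel₀ _ hrne
  -- key induction
  have key : ∀ k : ℕ, r ^ k * (d 1 - (α + β)) + (α * (2 * k + 1) + β) ≤ d (2 * k + 1) := by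
    intro k
    induction k with
    | zero => simp
    | succ k ih =>
      have h3 : (3:ℕ) ≤ 2 * (k+1) + 1 := by omega
      have hodd : Odd (2 * (k+1) + 1) := ⟨k+1, by ring⟩
      have hrec' := hrec (2 * (k+1) + 1) h3 hodd
      have hsub : 2 * (k+1) + 1 - 2 = 2 * k + 1 := by omega
      rw [hsub] at hrec'
      have hmul : r * (r ^ k * (d 1 - (α + β)) + (α * (2 * k + 1) + β)) ≤ r * d (2 * k + 1) :=
        mul_le_mul_of_nonneg_left ih (by linarith)
      have hcast : ((2 * (k+1) + 1 : ℕ) : ℝ) = 2 * k + 3 := by push_cast; ring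
      rw [hcast] at hrec'
      have halg : r ^ (k+1) * (d 1 - (α + β)) + (α * (2 * (k+1) + 1) + β)
          = r * (r ^ k * (d 1 - (α + β)) + (α * (2 * k + 1) + β)) - a * (2 * k + 3) + b := by
        have : a = α * (r - 1) := hαr.symm
        rw [this, pow_succ]
        nlinarith [hβr]
      push_cast
      rw [halg]
      linarith
  intro j hj1 hodd hthr
  obtain ⟨k, hk⟩ := hodd
  have hk' : j = 2 * k + 1 := by omega
  subst hk'
  have hdiv : (2 * k + 1 - 1) / 2 = k := by omega
  rw [hdiv]
  have hC : d 1 - (α + β) = d 1 - a * (3 * r - 1) / (r - 1) ^ 2 + b / (r - 1) := by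
    rw [hβ, hα]
    field_simp
    ring
  have hg : (0:ℝ) ≤ α * (2 * k + 1) + β := by
    have hα0 : 0 < α := div_pos ha hr1
    have h1 : b / a - 2 * r / (r - 1) ≤ (2 * k + 1 : ℝ) := by
      have : ((2 * k + 1 : ℕ) : ℝ) = 2 * k + 1 := by push_cast; ring
      linarith [hthr, this ▸ hthr]
    -- multiply through
    have h2 : b ≤ a * (2 * k + 1) + a * (2 * r / (r - 1)) := by
      have := mul_le_mul_of_nonneg_left h1 (le_of_lt ha)
      have hba : a * (b / a) = b := mul_div_cancel₀ b (ne_of_gt ha)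
      nlinarith
    have h3 : a * (2 * r / (r - 1)) = 2 * r * α := by
      rw [hα]; field_simp
    have h4 : b ≤ a * (2 * k + 1) + 2 * r * α := by linarith
    have : (α * (2 * k + 1) + β) * (r - 1) = a * (2 * k + 1) + 2 * r * α - b := by
      rw [add_mul, hβr, mul_comm α _, mul_assoc]
      rw [hαr]; ring
    nlinarith
  have := key k
  have hcast : ((2 * k + 1 : ℕ) : ℝ) = 2 * k + 1 := by push_cast; ring
  rw [← hC]
  push_cast at this
  linarith
end
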